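/- arXiv:1905.06513 — 2 statements merged into one kernel-verified Lean document; each statement's English description precedes it below -/
import Mathlib

section
/- Let r be a power of an odd prime p, q = r², write q − 1 = e·f, and set R = (r+1)/gcd(r+1, f). Suppose t·f is even and 1 ≤ t ≤ R, and suppose that either (A) f is even and 4 divides (t−1)(r+1), or (B) f is odd. Then t·f + 2 belongs to Σ(eg, q). -/
open Finset

/-- Δ_S(a) = ∏_{b ∈ S, b ≠ a} (a − b). -/
def deltaS {F : Type*} [Field F] [DecidableEq F] (S : Finset F) (a : F) : F :=
  ∏ b ∈ S.erase a, (a - b)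

/-- n ∈ Σ(eg,q): n is even, n ≥ 2, and there is S ⊆ F_q with |S| = n − 1 such that
η_q(−Δ_S(a)) = 1, i.e. −Δ_S(a) is a square, for all a ∈ S. -/
def SigmaEG (F : Type*) [Field F] [DecidableEq F] (n : ℕ) : Prop :=
  Even n ∧ 2 ≤ n ∧ ∃ S : Finset F, S.card = n - 1 ∧
    ∀ a ∈ S, IsSquare (-(deltaS S a))

/-!
Take `S = {0} ∪ {a | a ^ f ∈ U}` for a set `U` of `t` distinct `(r + 1)`-th roots of unity with
`u ^ e = 1`. Then `S` is the root set of `X * ∏ u ∈ U, (X ^ f - u)`, which divides `X ^ q - X`,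
so `Δ_S(a)` is the derivative at `a`: `∏ u, -u` at `0`, and `f * u * ∏ v ≠ u, (u - v)` when
`a ^ f = u`. In `F_{r²}` every `(r + 1)`-th root of unity and every element of the prime field is
a square, and for distinct `(r + 1)`-th roots of unity the Frobenius gives
`(u - v) ^ (r - 1) * u * v = -1`, so `(u - v) ^ ((q - 1) / 2) = (-u * v) ^ ((r + 1) / 2) = ±1`.
With `U = {ζ ^ (g * a) | a ∈ A}`, where `ζ` has order `r + 1`, `g = gcd (r + 1) f` and
`A ⊆ [0, (r + 1) / g)`, all `-Δ_S(a)` are squares as soon as a parity condition on `A` holds.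
In case (A) `A = {0, …, t - 1}` satisfies it; in case (B) it amounts to `(r + 1) / 2 + ∑ A` being
even, which one gets by shifting one element of `{0, …, t - 1}` when `t < (r + 1) / g`, and which
holds automatically when `t = (r + 1) / g`.
-/

open Polynomial

section RootsOfDvd

theorem deltaS_eq_eval_derivative {F : Type*} [Field F] [DecidableEq F] (S : Finset F) {a : F}
    (ha : a ∈ S) : deltaS S a = (derivative (∏ s ∈ S, (X - C s))).eval a := by
  rw [Finset.prod_eq_multiset_prod, eval_multiset_prod_X_sub_C_derivative ha, deltaS,
    Finset.prod_eq_multiset_prod, Finset.erase_val]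

variable {F : Type*} [Field F] [Fintype F]

theorem FiniteField.splits_X_pow_card_sub_X' : Splits (X ^ Fintype.card F - X : F[X]) := by
  rw [splits_iff_card_roots, FiniteField.roots_X_pow_card_sub_X,
    FiniteField.X_pow_card_sub_X_natDegree_eq F Fintype.one_lt_card]
  rfl

variable [DecidableEq F]

theorem prod_X_sub_C_roots_toFinset_of_dvd {P : F[X]} (hP : P.Monic)
    (hdvd : P ∣ X ^ Fintype.card F - X) : ∏ a ∈ P.roots.toFinset, (X - C a) = P := by
  have hne : (X ^ Fintype.card F - X : F[X]) ≠ 0 :=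
    FiniteField.X_pow_card_sub_X_ne_zero F Fintype.one_lt_card
  have hnodup : P.roots.Nodup := Multiset.nodup_of_le (roots.le_of_dvd hne hdvd)
    (FiniteField.roots_X_pow_card_sub_X F ▸ Finset.univ.nodup)
  rw [Finset.prod_eq_multiset_prod, Multiset.toFinset_val, hnodup.dedup]
  exact ((FiniteField.splits_X_pow_card_sub_X'.of_dvd hne hdvd).eq_prod_roots_of_monic hP).symm

theorem sigmaEG_of_dvd_X_pow_card_sub_X {n : ℕ} (hn : Even n) (hn2 : 2 ≤ n) {P : F[X]}
    (hP : P.Monic) (hdvd : P ∣ X ^ Fintype.card F - X) (hdeg : P.natDegree = n - 1)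
    (hsq : ∀ a, P.IsRoot a → IsSquare (-(derivative P).eval a)) : SigmaEG F n := by
  have hprod := prod_X_sub_C_roots_toFinset_of_dvd hP hdvd
  refine ⟨hn, hn2, P.roots.toFinset, ?_, fun a ha => ?_⟩
  · rw [← hdeg, ← natDegree_finsetProd_X_sub_C_eq_card P.roots.toFinset id]
    exact congrArg natDegree hprod
  · rw [deltaS_eq_eval_derivative _ ha, hprod]
    exact hsq a (isRoot_of_mem_roots (Multiset.mem_toFinset.1 ha))

end RootsOfDvd

section PowFiberPoly

variable {F : Type*} [Field F]

noncomputable def powFiberPoly (U : Finset F) (f : ℕ) : F[X] := X * ∏ u ∈ U, (X ^ f - C u)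

variable {U : Finset F} {f : ℕ}

theorem powFiberPoly_monic (hf : f ≠ 0) : (powFiberPoly U f).Monic :=
  monic_X.mul (monic_prod_of_monic _ _ fun u _ => monic_X_pow_sub_C u hf)

theorem natDegree_powFiberPoly (hf : f ≠ 0) : (powFiberPoly U f).natDegree = #U * f + 1 := by
  rw [powFiberPoly, natDegree_mul X_ne_zero
      (monic_prod_of_monic _ _ fun u _ => monic_X_pow_sub_C u hf).ne_zero, natDegree_X,
    natDegree_prod_of_monic _ _ fun u _ => monic_X_pow_sub_C u hf]
  simp [add_comm]

theorem powFiberPoly_dvd_X_pow_sub_X {e : ℕ} (hU : ∀ u ∈ U, u ^ e = 1) :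
    powFiberPoly U f ∣ X ^ (e * f + 1) - X := by
  have hsplit : (X : F[X]) ^ (e * f + 1) - X = X * ((X ^ f) ^ e - 1) := by ring
  rw [hsplit, powFiberPoly]
  refine mul_dvd_mul_left X (Finset.prod_dvd_of_coprime (fun u _ v _ huv => ?_) fun u hu => ?_)
  · have h := (isCoprime_X_sub_C_of_isUnit_sub (sub_ne_zero.2 huv).isUnit).map
      (expand F f : F[X] →+* F[X])
    simpa only [map_sub, AlgHom.coe_toRingHom, expand_X, expand_C] using h
  · simpa only [← map_pow, hU u hu, map_one] using sub_dvd_pow_sub_pow (X ^ f) (C u) e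

theorem eval_derivative_powFiberPoly_zero [DecidableEq F] (hf : f ≠ 0) :
    (derivative (powFiberPoly U f)).eval 0 = ∏ u ∈ U, -u := by
  simp [powFiberPoly, derivative_mul, eval_prod, zero_pow hf]

theorem eval_derivative_powFiberPoly [DecidableEq F] {a u : F} (hu : u ∈ U) (ha : a ^ f = u) :
    (derivative (powFiberPoly U f)).eval a = f * u * ∏ v ∈ U.erase u, (u - v) := by
  have hsplit : powFiberPoly U f = X * (X ^ f - C u) * ∏ v ∈ U.erase u, (X ^ f - C v) := by
    rw [powFiberPoly, mul_assoc, ← Finset.mul_prod_erase _ (fun v => X ^ f - C v) hu]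
  have hX : a * (f * a ^ (f - 1)) = f * u := by
    rcases Nat.eq_zero_or_pos f with rfl | hf
    · simp
    · rw [mul_left_comm, mul_pow_sub_one hf.ne', ha]
  rw [hsplit, derivative_mul, derivative_mul]
  simp [eval_prod, ha, derivative_X_pow, hX]

theorem exists_pow_eq_of_isRoot_powFiberPoly {a : F} (hroot : (powFiberPoly U f).IsRoot a)
    (ha : a ≠ 0) : ∃ u ∈ U, a ^ f = u := by
  simpa [powFiberPoly, eval_prod, ha, Finset.prod_eq_zero_iff, sub_eq_zero] using hroot

end PowFiberPoly

section Frobenius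

variable {R : Type*} [CommRing R] {p m : ℕ} [ExpChar R p]

theorem natCast_pow_expChar_pow (n : ℕ) : (n : R) ^ p ^ m = n := by
  simpa only [iterateFrobenius_def] using map_natCast (iterateFrobenius R p m) n

theorem sub_pow_expChar_pow_mul_mul {u v : R} (hu : u ^ (p ^ m + 1) = 1)
    (hv : v ^ (p ^ m + 1) = 1) : (u - v) ^ p ^ m * (u * v) = v - u := by
  rw [sub_pow_expChar_pow]
  linear_combination v * hu - u * hv

end Frobenius

theorem sub_pow_mul_half_eq_neg_mul_pow {F : Type*} [Field F] {p m r : ℕ} [ExpChar F p]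
    (hr : r = p ^ m) (hodd : Odd r) {u v : F} (hu : u ^ (r + 1) = 1) (hv : v ^ (r + 1) = 1)
    (huv : u ≠ v) :
    (u - v) ^ ((r - 1) * ((r + 1) / 2)) = (-(u * v)) ^ ((r + 1) / 2) := by
  have hfrob : (u - v) ^ r * (u * v) = v - u := by
    subst hr; exact sub_pow_expChar_pow_mul_mul hu hv
  obtain ⟨k, rfl⟩ := hodd
  have hhalf : (2 * k + 1 + 1) / 2 = k + 1 := by omega
  rw [hhalf, Nat.add_sub_cancel, pow_mul]
  have h1 : ((u - v) ^ (2 * k) * (u * v)) ^ (k + 1) = (-1) ^ (k + 1) := by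
    congr 1
    refine mul_left_cancel₀ (sub_ne_zero.2 huv) ?_
    linear_combination hfrob
  have h2 : (u * v) ^ (2 * k + 2) = 1 := by rw [mul_pow, hu, hv, one_mul]
  linear_combination (u * v) ^ (k + 1) * h1 - ((u - v) ^ (2 * k)) ^ (k + 1) * h2

section FieldOfCardSq

variable {F : Type*} [Field F] [Fintype F] {p m r : ℕ} [ExpChar F p]

theorem isSquare_of_pow_eq_one_of_dvd (hcard : Fintype.card F = r ^ 2) (hodd : Odd r) {x : F}
    {n : ℕ} (hn : n ∣ (r - 1) * ((r + 1) / 2)) (hx : x ^ n = 1) : IsSquare x := by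
  rcases eq_or_ne x 0 with rfl | hx0
  · exact IsSquare.zero
  obtain ⟨k, rfl⟩ := hodd
  have hchar : ringChar F ≠ 2 := by
    rw [Ne, FiniteField.even_card_iff_char_two, hcard, ← Nat.even_iff, Nat.even_pow]
    simp
  have hhalf : Fintype.card F / 2 = (2 * k + 1 - 1) * ((2 * k + 1 + 1) / 2) := by
    rw [hcard, show 2 * k + 1 - 1 = 2 * k by omega, show (2 * k + 1 + 1) / 2 = k + 1 by omega,
      show (2 * k + 1) ^ 2 = 2 * (2 * k * (k + 1)) + 1 by ring]
    omega
  obtain ⟨c, hc⟩ := hn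
  rw [FiniteField.isSquare_iff hchar hx0, hhalf, hc, pow_mul, hx, one_pow]

theorem isSquare_of_pow_succ_eq_one (hcard : Fintype.card F = r ^ 2) (hodd : Odd r) {x : F}
    (hx : x ^ (r + 1) = 1) : IsSquare x := by
  refine isSquare_of_pow_eq_one_of_dvd hcard hodd ?_ hx
  obtain ⟨k, rfl⟩ := hodd
  rw [show 2 * k + 1 - 1 = 2 * k by omega, show (2 * k + 1 + 1) / 2 = k + 1 by omega]
  exact Dvd.intro k (by ring)

theorem isSquare_natCast_of_card_eq_sq (hcard : Fintype.card F = r ^ 2) (hr : r = p ^ m)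
    (hodd : Odd r) (n : ℕ) : IsSquare (n : F) := by
  rcases eq_or_ne (n : F) 0 with hn | hn
  · exact hn ▸ IsSquare.zero
  refine isSquare_of_pow_eq_one_of_dvd hcard hodd (dvd_mul_right _ _) (mul_left_cancel₀ hn ?_)
  rw [mul_one, mul_pow_sub_one (hr ▸ (expChar_pow_pos F p m).ne'), hr, natCast_pow_expChar_pow]

theorem isSquare_prod_sub_of_card_eq_sq (hcard : Fintype.card F = r ^ 2) (hr : r = p ^ m)
    (hodd : Odd r) [DecidableEq F] {U : Finset F} (hU : ∀ v ∈ U, v ^ (r + 1) = 1) {u : F}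
    (hu : u ∈ U) (hsign : ∏ v ∈ U.erase u, (-(u * v)) ^ ((r + 1) / 2) = 1) :
    IsSquare (∏ v ∈ U.erase u, (u - v)) := by
  refine isSquare_of_pow_eq_one_of_dvd hcard hodd dvd_rfl ?_
  rw [← Finset.prod_pow, ← hsign]
  refine Finset.prod_congr rfl fun v hv => ?_
  exact sub_pow_mul_half_eq_neg_mul_pow hr hodd (hU u hu) (hU v (Finset.mem_of_mem_erase hv))
    (Finset.ne_of_mem_erase hv).symm

theorem sigmaEG_of_card_eq_sq [DecidableEq F] (hcard : Fintype.card F = r ^ 2) (hr : r = p ^ m)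
    (hodd : Odd r) {e f : ℕ} (hef : r ^ 2 - 1 = e * f) {U : Finset F}
    (hUe : ∀ u ∈ U, u ^ e = 1) (hUr : ∀ u ∈ U, u ^ (r + 1) = 1) (heven : Even (#U * f))
    (hsign : ∀ u ∈ U, ∏ v ∈ U.erase u, (-(u * v)) ^ ((r + 1) / 2) = 1) :
    SigmaEG F (#U * f + 2) := by
  have hcard' : Fintype.card F = e * f + 1 := by
    have := Fintype.one_lt_card (α := F); omega
  have hf : f ≠ 0 := by
    rintro rfl
    have := Fintype.one_lt_card (α := F); omega
  have hsq {x : F} (hx : x ^ (r + 1) = 1) : IsSquare x :=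
    isSquare_of_pow_succ_eq_one hcard hodd hx
  have hneg : IsSquare (-1 : F) := hsq hodd.add_one.neg_one_pow
  refine sigmaEG_of_dvd_X_pow_card_sub_X (heven.add even_two) (by omega) (powFiberPoly_monic hf)
    (hcard' ▸ powFiberPoly_dvd_X_pow_sub_X hUe) (by rw [natDegree_powFiberPoly hf]; omega)
    fun a ha => ?_
  rcases eq_or_ne a 0 with rfl | ha0
  · rw [eval_derivative_powFiberPoly_zero hf, neg_eq_neg_one_mul]
    exact hneg.mul (isSquare_prod _ fun u hu => by
      rw [neg_eq_neg_one_mul]; exact hneg.mul (hsq (hUr u hu)))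
  · obtain ⟨u, hu, hau⟩ := exists_pow_eq_of_isRoot_powFiberPoly ha ha0
    rw [eval_derivative_powFiberPoly hu hau, neg_eq_neg_one_mul]
    exact hneg.mul (((isSquare_natCast_of_card_eq_sq hcard hr hodd f).mul (hsq (hUr u hu))).mul
      (isSquare_prod_sub_of_card_eq_sq hcard hr hodd hUr hu (hsign u hu)))

end FieldOfCardSq

theorem FiniteField.exists_isPrimitiveRoot {F : Type*} [Field F] [Fintype F] {n : ℕ}
    (hn : n ∣ Fintype.card F - 1) : ∃ ζ : F, IsPrimitiveRoot ζ n := by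
  classical
  obtain ⟨g, hg⟩ := IsCyclic.exists_ofOrder_eq_natCard (α := Fˣ)
  rw [Nat.card_eq_fintype_card, Fintype.card_units] at hg
  have hζ : IsPrimitiveRoot (g : F) (Fintype.card F - 1) := by
    rw [← hg, ← orderOf_units]; exact IsPrimitiveRoot.orderOf _
  have hq : 0 < Fintype.card F - 1 := by have := Fintype.one_lt_card (α := F); omega
  exact ⟨_, hζ.pow hq (Nat.div_mul_cancel hn).symm⟩

theorem IsPrimitiveRoot.pow_eq_neg_one {F : Type*} [Field F] {ζ : F} {k : ℕ}
    (hζ : IsPrimitiveRoot ζ (2 * k)) (hk : k ≠ 0) : ζ ^ k = -1 :=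
  (hζ.pow (by omega) (mul_comm 2 k)).eq_neg_one_of_two_right

theorem IsPrimitiveRoot.neg_pow_mul_pow_pow {F : Type*} [Field F] {ζ : F} {k : ℕ}
    (hζ : IsPrimitiveRoot ζ (2 * k)) (hk : k ≠ 0) (i j : ℕ) :
    (-(ζ ^ i * ζ ^ j)) ^ k = (-1) ^ (k + i + j) := by
  have h : -(ζ ^ i * ζ ^ j) = ζ ^ (k + i + j) := by
    rw [pow_add, pow_add, hζ.pow_eq_neg_one hk]; ring
  rw [h, ← pow_mul, mul_comm, pow_mul, hζ.pow_eq_neg_one hk]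

theorem Finset.image_erase_of_injOn {α β : Type*} [DecidableEq α] [DecidableEq β]
    {f : α → β} {s : Finset α} (hf : Set.InjOn f s) {a : α} (ha : a ∈ s) :
    (s.image f).erase (f a) = (s.erase a).image f := by
  ext x
  simp only [mem_erase, mem_image]
  constructor
  · rintro ⟨hx, b, hb, rfl⟩
    exact ⟨b, ⟨fun h => hx (h ▸ rfl), hb⟩, rfl⟩
  · rintro ⟨b, ⟨hba, hb⟩, rfl⟩
    exact ⟨fun h => hba (hf hb ha h), b, hb, rfl⟩

theorem sigmaEG_of_exponents {F : Type*} [Field F] [Fintype F] [DecidableEq F] {p m r : ℕ}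
    [ExpChar F p] (hcard : Fintype.card F = r ^ 2) (hr : r = p ^ m) (hodd : Odd r) {e f : ℕ}
    (hef : r ^ 2 - 1 = e * f) {ζ : F} (hζ : IsPrimitiveRoot ζ (r + 1)) {g : ℕ}
    (hg : g ∣ r + 1) (hge : r + 1 ∣ g * e) {A : Finset ℕ} (hA : A ⊆ range ((r + 1) / g))
    (heven : Even (#A * f))
    (hpar : ∀ a ∈ A, Even (∑ b ∈ A.erase a, ((r + 1) / 2 + g * a + g * b))) :
    SigmaEG F (#A * f + 2) := by
  have hη : IsPrimitiveRoot (ζ ^ g) ((r + 1) / g) :=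
    hζ.pow (by omega) (Nat.mul_div_cancel' hg).symm
  have hinj : Set.InjOn (fun a => ζ ^ (g * a)) A := fun a ha b hb h => by
    simp only [pow_mul] at h
    exact hη.pow_inj (mem_range.1 (hA ha)) (mem_range.1 (hA hb)) h
  have hhalf : r + 1 = 2 * ((r + 1) / 2) := by obtain ⟨k, rfl⟩ := hodd; omega
  rw [← card_image_of_injOn hinj] at heven ⊢
  refine sigmaEG_of_card_eq_sq hcard hr hodd hef ?_ ?_ heven ?_ <;> simp only [mem_image]
  · rintro _ ⟨a, -, rfl⟩
    rw [← pow_mul, hζ.pow_eq_one_iff_dvd, mul_right_comm]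
    exact hge.mul_right a
  · rintro _ ⟨a, -, rfl⟩
    rw [← pow_mul, mul_comm, pow_mul, hζ.pow_eq_one, one_pow]
  · rintro _ ⟨a, ha, rfl⟩
    rw [image_erase_of_injOn hinj ha, prod_image fun b hb c hc => hinj (mem_of_mem_erase hb)
      (mem_of_mem_erase hc)]
    simp only [(hhalf ▸ hζ).neg_pow_mul_pow_pow (by omega), prod_pow_eq_pow_sum]
    exact (hpar a ha).neg_one_pow

theorem even_sum_erase_add_mul_add_mul_iff {A : Finset ℕ} {a : ℕ} (ha : a ∈ A) (c g : ℕ) :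
    Even (∑ b ∈ A.erase a, (c + g * a + g * b)) ↔
      Even ((#A + 1) * c + g * (#A * a + ∑ b ∈ A, b)) := by
  have hsum : ∑ b ∈ A.erase a, (c + g * a + g * b) + (c + g * a + g * a) =
      #A * (c + g * a) + g * ∑ b ∈ A, b := by
    rw [sum_erase_add _ _ ha, sum_add_distrib, sum_const, smul_eq_mul, mul_sum]
  rw [show (#A + 1) * c + g * (#A * a + ∑ b ∈ A, b) =
      ∑ b ∈ A.erase a, (c + g * a + g * b) + 2 * (c + g * a) by linarith]
  simp [Nat.even_add]

theorem exists_subset_range_card_eq_even_add_sum {n t : ℕ} (c : ℕ) (ht : 0 < t) (htn : t < n) :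
    ∃ A ⊆ range n, #A = t ∧ Even (c + ∑ a ∈ A, a) := by
  -- drop `t - 1` or `t` from `{0, …, t}`, whichever leaves the right parity
  set s := ∑ a ∈ range (t + 1), a
  obtain ⟨j, hj, hjs⟩ : ∃ j, t - 1 ≤ j ∧ j ≤ t ∧ j % 2 = (c + s) % 2 := by
    rcases Nat.mod_two_eq_zero_or_one ((c + s) + t) with h | h
    · exact ⟨t, by omega, le_rfl, by omega⟩
    · exact ⟨t - 1, le_rfl, by omega, by omega⟩
  have hjmem : j ∈ range (t + 1) := mem_range.2 (by omega)
  refine ⟨(range (t + 1)).erase j, fun a ha => ?_, ?_, ?_⟩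
  · exact mem_range.2 (by have := mem_range.1 (mem_of_mem_erase ha); omega)
  · rw [card_erase_of_mem hjmem, card_range, Nat.add_sub_cancel]
  · have := sum_erase_add _ id hjmem
    simp only [id] at this
    rw [Nat.even_iff]
    omega

theorem even_mul_div_two_add_sum_range {g t : ℕ} (hg : Odd g) (ht : Even t) :
    Even (g * t / 2 + ∑ a ∈ range t, a) := by
  obtain ⟨τ, rfl⟩ := ht
  obtain ⟨j, rfl⟩ := hg
  have hsum := sum_range_id_mul_two (τ + τ)
  refine ⟨τ * (j + τ), ?_⟩
  rcases τ with _ | s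
  · simp
  · have h : ∑ a ∈ range (s + 1 + (s + 1)), a = (s + 1) * (2 * s + 1) := by
      rw [show s + 1 + (s + 1) - 1 = 2 * s + 1 by omega] at hsum
      linarith
    rw [h, show (2 * j + 1) * (s + 1 + (s + 1)) = 2 * ((2 * j + 1) * (s + 1)) by ring,
      Nat.mul_div_cancel_left _ two_pos]
    ring

theorem stmt_11_general (p m : ℕ) (hp : p.Prime) (hodd : p ≠ 2)
    (r : ℕ) (hr : r = p ^ m)
    (F : Type*) [Field F] [Fintype F] [DecidableEq F] (hF : Fintype.card F = r ^ 2)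
    (e f t : ℕ) (hef : r ^ 2 - 1 = e * f)
    (htf : Even (t * f)) (ht1 : 1 ≤ t) (ht2 : t ≤ (r + 1) / Nat.gcd (r + 1) f)
    (hcond : (Even f ∧ 4 ∣ (t - 1) * (r + 1)) ∨ Odd f) :
    SigmaEG F (t * f + 2) := by
  have : Fact p.Prime := ⟨hp⟩
  have : CharP F p := charP_of_card_eq_prime_pow (f := m * 2) (by rw [hF, hr, pow_mul])
  have hr_odd : Odd r := hr ▸ (hp.odd_of_ne_two hodd).pow
  have hr_dvd : r + 1 ∣ r ^ 2 - 1 := ⟨r - 1, by rw [← one_pow 2, Nat.sq_sub_sq, one_pow]⟩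
  obtain ⟨ζ, hζ⟩ := FiniteField.exists_isPrimitiveRoot (F := F) (n := r + 1) (hF ▸ hr_dvd)
  set g := Nat.gcd (r + 1) f
  have hge : r + 1 ∣ g * e := dvd_gcd_mul_of_dvd_mul (hr_dvd.trans ⟨1, by rw [hef]; ring⟩)
  have of_exponents : ∀ A ⊆ range ((r + 1) / g), #A = t →
      (∀ a ∈ A, Even (∑ b ∈ A.erase a, ((r + 1) / 2 + g * a + g * b))) →
      SigmaEG F (t * f + 2) := fun A hA hAt hpar =>
    hAt ▸ sigmaEG_of_exponents hF hr hr_odd hef hζ (Nat.gcd_dvd_left _ _) hge hA (hAt ▸ htf) hpar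
  rcases hcond with ⟨hf_even, h4⟩ | hf_odd
  · have hg_even : Even g := even_iff_two_dvd.2
      (Nat.dvd_gcd (even_iff_two_dvd.1 hr_odd.add_one) (even_iff_two_dvd.1 hf_even))
    have hβ : Even ((t - 1) * ((r + 1) / 2)) := by
      obtain ⟨k, hk⟩ := h4
      have hhalf : r + 1 = 2 * ((r + 1) / 2) := by obtain ⟨j, rfl⟩ := hr_odd; omega
      rw [hhalf, mul_left_comm] at hk
      exact ⟨k, by omega⟩
    refine of_exponents (range t) (range_subset_range.2 ht2) (card_range t) fun a ha => ?_
    rw [even_sum_erase_add_mul_add_mul_iff ha, card_range,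
      show t + 1 = t - 1 + 2 by omega, add_mul]
    exact (hβ.add (even_two.mul_right _)).add (hg_even.mul_right _)
  · have hg_odd : Odd g := hf_odd.of_dvd_nat (Nat.gcd_dvd_right _ _)
    have ht_even : Even t := (Nat.even_mul.1 htf).resolve_right (Nat.not_even_iff_odd.2 hf_odd)
    have hpar (A : Finset ℕ) (hAt : #A = t) (hA : Even ((r + 1) / 2 + ∑ b ∈ A, b)) :
        ∀ a ∈ A, Even (∑ b ∈ A.erase a, ((r + 1) / 2 + g * a + g * b)) := fun a ha => by
      have hg : ¬Even g := Nat.not_even_iff_odd.2 hg_odd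
      rw [even_sum_erase_add_mul_add_mul_iff ha, hAt]
      simp only [Nat.even_add, Nat.even_mul, Nat.even_add_one] at hA ⊢
      tauto
    rcases ht2.lt_or_eq with ht_lt | rfl
    · obtain ⟨A, hA, hAt, hsum⟩ :=
        exists_subset_range_card_eq_even_add_sum ((r + 1) / 2) ht1 ht_lt
      exact of_exponents A hA hAt (hpar A hAt hsum)
    · refine of_exponents _ subset_rfl (card_range _) (hpar _ (card_range _) ?_)
      have h := even_mul_div_two_add_sum_range (t := (r + 1) / g) hg_odd ht_even
      rwa [Nat.mul_div_cancel' (Nat.gcd_dvd_left (r + 1) f)] at h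

theorem stmt_11 (p m : ℕ) (hp : p.Prime) (hodd : p ≠ 2) (hm : 0 < m)
    (r : ℕ) (hr : r = p ^ m)
    (F : Type*) [Field F] [Fintype F] [DecidableEq F] (hF : Fintype.card F = r ^ 2)
    (e f t : ℕ) (hef : r ^ 2 - 1 = e * f)
    (htf : Even (t * f)) (ht1 : 1 ≤ t) (ht2 : t ≤ (r + 1) / Nat.gcd (r + 1) f)
    (hcond : (Even f ∧ 4 ∣ (t - 1) * (r + 1)) ∨ Odd f) :
    SigmaEG F (t * f + 2) :=
  stmt_11_general p m hp hodd r hr F hF e f t hef htf ht1 ht2 hcond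
end

section
/- Let p be an odd prime, q = p^m, and Q = q^l with l ≥ 1. If n is an even integer with 2 ≤ n ≤ q − 1 and n belongs to Σ(g, q), then n·q^{l−1} belongs to Σ(g, Q). -/
/-!
Embed `F` in `K` and let `A` be an `F`-linear complement of the line `F · 1` in `K`; the new set
is `S + A`, of size `n · q^(l-1)`. For `x = s + a`, the factors `x - y` with `y ∈ s + A`
multiply to `∏_{w ∈ A ∖ 0} w`, and those with `y ∈ s' + A`, `s' ≠ s`, to
`∏_{w ∈ A} (c + w) = c · ∏_{w ∈ A} (1 + w)` with `c = s - s' ∈ Fˣ`, because `w ↦ c • w`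
permutes `A` and `c ^ |A| = c`. Hence `Δ_{S+A}(s + a) = C · Δ_S(s)` for a constant `C`, and
elements of `Fˣ` in one square class of `F` stay in one square class of `K`.
-/

open Finset

/-- n ∈ Σ(g,q): n is even, n ≥ 2, and there is S ⊆ F_q with |S| = n such that
the quadratic-character values η_q(Δ_S(a)) agree for all a ∈ S
(equivalently, the Δ_S(a) are all squares or all nonsquares). -/
def SigmaG (F : Type*) [Field F] [DecidableEq F] (n : ℕ) : Prop :=
  Even n ∧ 2 ≤ n ∧ ∃ S : Finset F, S.card = n ∧
    ((∀ a ∈ S, IsSquare (deltaS S a)) ∨ (∀ a ∈ S, ¬ IsSquare (deltaS S a)))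

theorem Finset.prod_product_erase {α β M : Type*} [DecidableEq α] [DecidableEq β] [CommMonoid M]
    {S : Finset α} {T : Finset β} {s : α} {t : β} (hs : s ∈ S) (f : α × β → M) :
    ∏ z ∈ (S ×ˢ T).erase (s, t), f z =
      (∏ t' ∈ T.erase t, f (s, t')) * ∏ s' ∈ S.erase s, ∏ t' ∈ T, f (s', t') := by
  have hsplit : (S ×ˢ T).erase (s, t) = {s} ×ˢ T.erase t ∪ S.erase s ×ˢ T := by
    ext ⟨a, b⟩
    simp only [mem_erase, mem_product, mem_union, mem_singleton, ne_eq, Prod.mk.injEq]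
    by_cases has : a = s <;> simp_all
  rw [hsplit, prod_union (disjoint_left.mpr (by simp +contextual)), prod_product, prod_product,
    prod_singleton]

theorem Finset.forall_or_forall_not_iff {α : Type*} {S : Finset α} {P : α → Prop} :
    ((∀ a ∈ S, P a) ∨ ∀ a ∈ S, ¬P a) ↔ ∀ a ∈ S, ∀ b ∈ S, (P a ↔ P b) := by
  refine ⟨by rintro (h | h) a ha b hb <;> simp [h a ha, h b hb], fun h => ?_⟩
  by_cases hP : ∃ a ∈ S, P a
  · obtain ⟨a, ha, hPa⟩ := hP
    exact .inl fun b hb => (h a ha b hb).mp hPa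
  · exact .inr fun a ha hPa => hP ⟨a, ha, hPa⟩

theorem isSquare_mul_of_isSquare_iff {F : Type*} [Field F] [Fintype F] [DecidableEq F]
    {x y : F} (hx : x ≠ 0) (hy : y ≠ 0) (h : IsSquare x ↔ IsSquare y) : IsSquare (x * y) := by
  have hχ : quadraticChar F x = quadraticChar F y := by
    by_cases hsq : IsSquare x
    · rw [(quadraticChar_one_iff_isSquare hx).mpr hsq,
        (quadraticChar_one_iff_isSquare hy).mpr (h.mp hsq)]
    · rw [quadraticChar_neg_one_iff_not_isSquare.mpr hsq,
        quadraticChar_neg_one_iff_not_isSquare.mpr (h.not.mp hsq)]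
  rw [← quadraticChar_one_iff_isSquare (mul_ne_zero hx hy), map_mul, ← hχ,
    ← quadraticChar_sq_one hx, sq]

theorem FiniteField.nonempty_ringHom_of_card_eq_pow {F K : Type*} [Field F] [Fintype F]
    [Field K] [Fintype K] {l : ℕ} (hK : Fintype.card K = Fintype.card F ^ l) :
    Nonempty (F →+* K) := by
  obtain ⟨p, hchar, m, hp, hF⟩ := FiniteField.card' F
  have := Fact.mk hp
  have : CharP K p := charP_of_card_eq_prime_pow (f := m * l) (by rw [hK, hF, pow_mul])
  let := ZMod.algebra F p
  let := ZMod.algebra K p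
  have hdvd : Module.finrank (ZMod p) F ∣ Module.finrank (ZMod p) K := by
    have hrankF := FiniteField.pow_finrank_eq_card p F
    have hrankK := FiniteField.pow_finrank_eq_card p K
    rw [hF] at hrankF
    rw [hK, hF, ← pow_mul] at hrankK
    rw [Nat.pow_right_injective hp.two_le hrankF, Nat.pow_right_injective hp.two_le hrankK]
    exact dvd_mul_right _ _
  exact (FiniteField.nonempty_algHom_of_finrank_dvd hdvd).map (·.toRingHom)

theorem isSquare_mul_iff_of_isSquare_mul {K : Type*} [Field K] {c u v : K} (hu : u ≠ 0)
    (hv : v ≠ 0) (h : IsSquare (u * v)) : IsSquare (c * u) ↔ IsSquare (c * v) := by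
  have key : ∀ {u v : K}, u ≠ 0 → IsSquare (u * v) → IsSquare (c * u) → IsSquare (c * v) := by
    intro u v hu h hcu
    have hcv : c * v = c * u * (u * v) / (u * u) := by field_simp
    exact hcv ▸ (hcu.mul h).div (.mul_self u)
  exact ⟨key hu h, key hv (mul_comm u v ▸ h)⟩

theorem deltaS_ne_zero {K : Type*} [Field K] [DecidableEq K] (S : Finset K) (a : K) :
    deltaS S a ≠ 0 :=
  prod_ne_zero_iff.mpr fun _ hb => sub_ne_zero.mpr (ne_of_mem_erase hb).symm

section AddSubmodule

variable {F K : Type*} [Field F] [Field K] [Algebra F K]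

theorem Submodule.card_mul_card_of_isCompl_one [Fintype F] [Fintype K] {A : Submodule F K}
    [Fintype A] (hA : IsCompl 1 A) : Fintype.card F * Fintype.card A = Fintype.card K := by
  have hrank := Submodule.finrank_add_eq_of_isCompl hA
  rw [Submodule.one_eq_span, finrank_span_singleton one_ne_zero] at hrank
  rw [Module.card_eq_pow_finrank (K := F) (V := A), Module.card_eq_pow_finrank (K := F) (V := K),
    ← hrank, pow_add, pow_one]

theorem prod_algebraMap_add [Fintype F] (A : Submodule F K) [Fintype A] {c : F} (hc : c ≠ 0) :
    ∏ w : A, (algebraMap F K c + w) = algebraMap F K c * ∏ w : A, (1 + (w : K)) := by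
  have hsmul : Function.Bijective (c • · : A → A) :=
    Finite.injective_iff_bijective.mp (smul_right_injective A hc)
  calc ∏ w : A, (algebraMap F K c + w) = ∏ w : A, (algebraMap F K c + ↑(c • w)) :=
        (Fintype.prod_bijective _ hsmul _ _ fun _ => rfl).symm
    _ = ∏ w : A, algebraMap F K c * (1 + w) := by
        simp only [Submodule.coe_smul, Algebra.smul_def, mul_add, mul_one]
    _ = algebraMap F K (c ^ Fintype.card A) * ∏ w : A, (1 + (w : K)) := by
        rw [prod_mul_distrib, prod_const, map_pow, card_univ]
    _ = algebraMap F K c * ∏ w : A, (1 + (w : K)) := by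
        rw [Module.card_eq_pow_finrank (K := F) (V := A), FiniteField.pow_card_pow]

theorem injective_algebraMap_add {A : Submodule F K} (hA : Disjoint A 1) :
    Function.Injective fun z : F × A => algebraMap F K z.1 + z.2 := by
  rintro ⟨s, a⟩ ⟨s', a'⟩ h
  have hmem : (a' : K) - a ∈ A ⊓ 1 :=
    ⟨A.sub_mem a'.2 a.2, Submodule.mem_one.mpr ⟨s - s', by rw [map_sub]; linear_combination h⟩⟩
  rw [hA.eq_bot, Submodule.mem_bot, sub_eq_zero] at hmem
  obtain rfl : a = a' := Subtype.ext hmem.symm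
  simpa using h

variable [DecidableEq K]

def Finset.addSubmodule (S : Finset F) (A : Submodule F K) [Fintype A] : Finset K :=
  (S ×ˢ univ).image fun z : F × A => algebraMap F K z.1 + z.2

variable {A : Submodule F K} [Fintype A]

theorem Finset.card_addSubmodule (hA : Disjoint A 1) (S : Finset F) :
    (S.addSubmodule A).card = S.card * Fintype.card A := by
  rw [addSubmodule, card_image_of_injective _ (injective_algebraMap_add hA), card_product,
    card_univ]

theorem deltaS_addSubmodule [Fintype F] [DecidableEq F] (hA : Disjoint A 1) {S : Finset F}
    {s : F} (hs : s ∈ S) (a : A) :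
    deltaS (S.addSubmodule A) (algebraMap F K s + a) =
      (∏ w ∈ univ.erase (0 : A), (w : K)) * (∏ w : A, (1 + (w : K))) ^ (S.card - 1) *
        algebraMap F K (deltaS S s) := by
  set φ : F × A → K := fun z => algebraMap F K z.1 + z.2
  have hinj : Function.Injective φ := injective_algebraMap_add hA
  have hsameCoset :
      ∏ a' ∈ univ.erase a, (φ (s, a) - φ (s, a')) = ∏ w ∈ univ.erase (0 : A), (w : K) :=
    prod_equiv (Equiv.subLeft a) (by simp [sub_eq_zero, eq_comm]) (by simp [φ])
  have hotherCoset : ∀ s' ∈ S.erase s,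
      ∏ a' : A, (φ (s, a) - φ (s', a')) = algebraMap F K (s - s') * ∏ w : A, (1 + (w : K)) := by
    intro s' hs'
    rw [← prod_algebraMap_add A (sub_ne_zero.mpr (ne_of_mem_erase hs').symm)]
    exact Fintype.prod_equiv (Equiv.subLeft a) _ _ fun a' => by simp [φ]; ring
  change deltaS ((S ×ˢ univ).image φ) (φ (s, a)) = _
  rw [deltaS, ← image_erase hinj, prod_image hinj.injOn, prod_product_erase hs, hsameCoset,
    prod_congr rfl hotherCoset, prod_mul_distrib, prod_const, card_erase_of_mem hs,
    ← map_prod, deltaS]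
  ring

theorem isSquare_deltaS_addSubmodule_iff [Fintype F] [DecidableEq F] (hA : Disjoint A 1)
    {S : Finset F} (hS : ∀ s ∈ S, ∀ s' ∈ S, (IsSquare (deltaS S s) ↔ IsSquare (deltaS S s')))
    {x y : K} (hx : x ∈ S.addSubmodule A) (hy : y ∈ S.addSubmodule A) :
    IsSquare (deltaS (S.addSubmodule A) x) ↔ IsSquare (deltaS (S.addSubmodule A) y) := by
  obtain ⟨⟨s, a⟩, hsa, rfl⟩ := mem_image.mp hx
  obtain ⟨⟨s', a'⟩, hsa', rfl⟩ := mem_image.mp hy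
  have hs := (mem_product.mp hsa).1
  have hs' := (mem_product.mp hsa').1
  rw [deltaS_addSubmodule hA hs, deltaS_addSubmodule hA hs']
  have hsq : IsSquare (deltaS S s * deltaS S s') :=
    isSquare_mul_of_isSquare_iff (deltaS_ne_zero S s) (deltaS_ne_zero S s') (hS s hs s' hs')
  refine isSquare_mul_iff_of_isSquare_mul ?_ ?_
    (by simpa only [map_mul] using hsq.map (algebraMap F K))
  all_goals exact (map_ne_zero _).mpr (deltaS_ne_zero S _)

end AddSubmodule

theorem stmt_15_general (l : ℕ) (hl : 1 ≤ l)
    (q : ℕ)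
    (F K : Type*) [Field F] [Fintype F] [DecidableEq F] [Field K] [Fintype K] [DecidableEq K]
    (hF : Fintype.card F = q) (hK : Fintype.card K = q ^ l)
    (n : ℕ) (hne : Even n) (hn2 : 2 ≤ n)
    (h : SigmaG F n) :
    SigmaG K (n * q ^ (l - 1)) := by
  obtain ⟨-, -, S, hScard, hS⟩ := h
  obtain ⟨e⟩ := FiniteField.nonempty_ringHom_of_card_eq_pow (hF ▸ hK)
  let := e.toAlgebra
  obtain ⟨A, hA⟩ := Submodule.exists_isCompl (1 : Submodule F K)
  let := Fintype.ofFinite A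
  have hcardA : Fintype.card A = q ^ (l - 1) := by
    have hq : 0 < q := hF ▸ Fintype.card_pos
    have := Submodule.card_mul_card_of_isCompl_one hA
    rw [hF, hK, ← Nat.sub_add_cancel hl, pow_succ'] at this
    exact Nat.eq_of_mul_eq_mul_left hq this
  refine ⟨hne.mul_right _, hn2.trans (Nat.le_mul_of_pos_right n (hcardA ▸ Fintype.card_pos)),
    S.addSubmodule A, by rw [card_addSubmodule hA.disjoint.symm, hScard, hcardA], ?_⟩
  exact forall_or_forall_not_iff.mpr fun x hx y hy =>
    isSquare_deltaS_addSubmodule_iff hA.disjoint.symm (forall_or_forall_not_iff.mp hS) hx hy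

theorem stmt_15 (p m l : ℕ) (hp : p.Prime) (hodd : p ≠ 2) (hm : 0 < m) (hl : 1 ≤ l)
    (q : ℕ) (hq : q = p ^ m)
    (F K : Type*) [Field F] [Fintype F] [DecidableEq F] [Field K] [Fintype K] [DecidableEq K]
    (hF : Fintype.card F = q) (hK : Fintype.card K = q ^ l)
    (n : ℕ) (hne : Even n) (hn2 : 2 ≤ n) (hnq : n ≤ q - 1)
    (h : SigmaG F n) :
    SigmaG K (n * q ^ (l - 1)) :=
  stmt_15_general l hl q F K hF hK n hne hn2 h
end
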